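/- Fix d ∈ ℕ+, a continuous strictly positive similarity function δ : ℝ^d × ℝ^d → ℝ, and head parameter matrices W_VO, W_K, W_Q ∈ ℝ^{d×d}. Let Q* ∈ ℝ^{d×n*}, K*, V* ∈ ℝ^{d×m*} be fixed matrices and p : {1,…,m*} → (0,1] a probability vector. Let τ : ℕ+ → {1,…,m*} and ρ : ℕ+ → {1,…,n*} be fixed index maps, and suppose for each n, m ∈ ℕ+ there are random matrices Q^(n) ∈ ℝ^{d×n}, K^(m), V^(m) ∈ ℝ^{d×m} such that: for each fixed j, ‖Q_j^(n) − Q*_{ρ(j)}‖ → 0 in probability as n → ∞; for each fixed i, ‖K_i^(m) − K*_{τ(i)}‖ → 0 and ‖V_i^(m) − V*_{τ(i)}‖ → 0 in probability as m → ∞; almost surely K_i^(m) = K_{i'}^(m) and V_i^(m) = V_{i'}^(m) whenever τ(i) = τ(i'); and for each v, (1/m)·|{k ≤ m : τ(k) = v}| → p(v) as m → ∞. Then for each fixed j, the j-th column of the single attention head output, Y_j^{(m,n)} = W_VO V^(m) Sim(W_K K^(m), W_Q Q^(n)) e_j, converges in probability (as m, n → ∞ jointly) to the ρ(j)-th column of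 the reweighted head output W_VO V* Sim^p(W_K K*, W_Q Q*). -/

import Mathlib

/-! Eventually every class of `τ` has a representative among the first `m` tokens, and then,
almost surely, tokens in the same class carry equal keys and values. Grouping them turns the
`m`-token head into a head over the `mstar` classes weighted by the class counts, and since a head
is unchanged by rescaling its weights, by the empirical class frequencies. That collapsed head is a
continuous function of (frequencies, representative keys, representative values, query) wherever
its normaliser is nonzero, in particular at the limit point `(p, Kstar, Vstar, Qstar (ρ j))`, so
the continuous mapping theorem for convergence in probability gives the claim. -/

open MeasureTheory Filter Finset

noncomputable section

/-- `X` converges to `Y` in probability (w.r.t. the measure `P`) along the filter `l`. -/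
def TendstoInProb {Ω : Type*} [MeasurableSpace Ω] (P : Measure Ω)
    {ι : Type*} (l : Filter ι) {E : Type*} [Dist E]
    (X : ι → Ω → E) (Y : Ω → E) : Prop :=
  ∀ ε : ℝ, 0 < ε → Tendsto (fun n => P {ω | ε < dist (X n ω) (Y ω)}) l (nhds 0)

/-- The output column of a single (weighted) attention head: with keys `Kc i`, values `Vc i`
(`i` ranging over a finite index type) and weights `w i`, the output for query `q` is
`W_VO V Sim^w(W_K K, W_Q q)`, i.e.
`∑ i, (w i δ(W_K K_i, W_Q q) / ∑ k, w k δ(W_K K_k, W_Q q)) • (W_VO V_i)`.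
Taking `w ≡ 1` gives the ordinary attention head; taking `w = p` gives the reweighted head. -/
def headOut {d : ℕ} {ι : Type*} [Fintype ι]
    (δ : (Fin d → ℝ) → (Fin d → ℝ) → ℝ)
    (WVO WK WQ : Matrix (Fin d) (Fin d) ℝ)
    (w : ι → ℝ) (Kc Vc : ι → Fin d → ℝ) (q : Fin d → ℝ) : Fin d → ℝ :=
  ∑ i : ι,
    ((w i * δ (WK.mulVec (Kc i)) (WQ.mulVec q)) /
      ∑ k : ι, w k * δ (WK.mulVec (Kc k)) (WQ.mulVec q)) • (WVO.mulVec (Vc i))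

open Topology

section ConvergenceInProbability

variable {Ω : Type*} [MeasurableSpace Ω] {P : Measure Ω} {ι : Type*} {l : Filter ι}

namespace TendstoInProb

theorem comp_tendsto {E : Type*} [Dist E] {X : ι → Ω → E} {Y : Ω → E}
    (h : TendstoInProb P l X Y) {κ : Type*} {l' : Filter κ} {g : κ → ι}
    (hg : Tendsto g l' l) : TendstoInProb P l' (fun n => X (g n)) Y :=
  fun ε hε => (h ε hε).comp hg

theorem congr_ae {E : Type*} [Dist E] {X Y : ι → Ω → E} {Z : Ω → E}
    (hY : TendstoInProb P l Y Z) (h : ∀ᶠ n in l, X n =ᵐ[P] Y n) :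
    TendstoInProb P l X Z := fun ε hε =>
  (hY ε hε).congr' <| h.mono fun n hn =>
    measure_congr <| hn.mono fun ω hω => by
      change (ε < dist _ _) = (ε < dist _ _)
      rw [hω]

theorem prodMk {E F : Type*} [PseudoMetricSpace E] [PseudoMetricSpace F]
    {X : ι → Ω → E} {x₀ : E} {Y : ι → Ω → F} {y₀ : F}
    (hX : TendstoInProb P l X fun _ => x₀) (hY : TendstoInProb P l Y fun _ => y₀) :
    TendstoInProb P l (fun n ω => (X n ω, Y n ω)) fun _ => (x₀, y₀) := by
  intro ε hε
  refine tendsto_nhds_bot_mono' (by simpa using (hX ε hε).add (hY ε hε)) fun n =>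
    (measure_mono fun ω hω => ?_).trans (measure_union_le _ _)
  simpa only [Set.mem_union, Set.mem_ofPred_eq, Prod.dist_eq, lt_max_iff] using hω

end TendstoInProb

theorem tendstoInProb_pi {κ : Type*} [Fintype κ] {E : κ → Type*} [∀ k, PseudoMetricSpace (E k)]
    {X : ι → Ω → ∀ k, E k} {x₀ : ∀ k, E k}
    (h : ∀ k, TendstoInProb P l (fun n ω => X n ω k) fun _ => x₀ k) :
    TendstoInProb P l X fun _ => x₀ := by
  intro ε hε
  refine tendsto_nhds_bot_mono' (by simpa using tendsto_finsetSum univ fun k _ => h k ε hε)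
    fun n => (measure_mono fun ω hω => ?_).trans (measure_iUnion_fintype_le _ _)
  simpa only [Set.mem_ofPred_eq, Set.mem_iUnion, ← not_le, dist_pi_le_iff hε.le, not_forall]
    using hω

variable (P) in
theorem Filter.Tendsto.tendstoInProb {E : Type*} [PseudoMetricSpace E] {a : ι → E} {c : E}
    (h : Tendsto a l (𝓝 c)) : TendstoInProb P l (fun n (_ : Ω) => a n) fun _ => c := by
  intro ε hε
  refine tendsto_const_nhds.congr' ?_
  filter_upwards [Metric.tendsto_nhds.mp h ε hε] with n hn
  simp [not_lt.mpr hn.le]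

theorem ContinuousAt.comp_tendstoInProb {E F : Type*} [PseudoMetricSpace E] [PseudoMetricSpace F]
    {f : E → F} {x₀ : E} (hf : ContinuousAt f x₀) {X : ι → Ω → E}
    (hX : TendstoInProb P l X fun _ => x₀) :
    TendstoInProb P l (fun n ω => f (X n ω)) fun _ => f x₀ := by
  intro ε hε
  obtain ⟨η, hη, hball⟩ := Metric.continuousAt_iff.mp hf ε hε
  refine tendsto_nhds_bot_mono' (hX (η / 2) (half_pos hη)) fun n => measure_mono fun ω hω => ?_
  simp only [Set.mem_ofPred_eq] at hω ⊢
  contrapose! hω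
  exact (hball (hω.trans_lt (half_lt_self hη))).le

end ConvergenceInProbability

open Matrix

def empiricalFreq {α : Type*} [DecidableEq α] (τ : ℕ → α) (m : ℕ) (v : α) : ℝ :=
  (((Finset.range m).filter fun k => τ k = v).card : ℝ) / (m : ℝ)

theorem exists_eq_of_tendsto_empiricalFreq {α : Type*} [DecidableEq α] {τ : ℕ → α} {v : α}
    {x : ℝ} (h : Tendsto (fun m => empiricalFreq τ m v) atTop (𝓝 x)) (hx : x ≠ 0) :
    ∃ k, τ k = v := by
  by_contra! hτ
  refine hx (tendsto_nhds_unique h ?_)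
  simp [empiricalFreq, hτ]

theorem sum_fin_eq_sum_card_nsmul {M : Type*} [AddCommMonoid M] {α : Type*} [Fintype α]
    [DecidableEq α] (τ : ℕ → α) {m : ℕ} {F : ℕ → M} {G : α → M}
    (hFG : ∀ a < m, F a = G (τ a)) :
    ∑ a : Fin m, F a = ∑ v, ((Finset.range m).filter fun k => τ k = v).card • G v := by
  rw [Fin.sum_univ_eq_sum_range, ← Finset.sum_fiberwise (Finset.range m) τ F]
  refine Finset.sum_congr rfl fun v _ => ?_
  rw [← Finset.sum_const]
  refine Finset.sum_congr rfl fun a ha => ?_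
  rw [Finset.mem_filter, Finset.mem_range] at ha
  rw [hFG a ha.1, ha.2]

section headOut

variable {d : ℕ} (δ : (Fin d → ℝ) → (Fin d → ℝ) → ℝ) (WVO WK WQ : Matrix (Fin d) (Fin d) ℝ)

theorem headOut_smul_weights {ι : Type*} [Fintype ι] {c : ℝ} (hc : c ≠ 0) (w : ι → ℝ)
    (Kc Vc : ι → Fin d → ℝ) (q : Fin d → ℝ) :
    headOut δ WVO WK WQ (c • w) Kc Vc q = headOut δ WVO WK WQ w Kc Vc q := by
  simp only [headOut, Pi.smul_apply, smul_eq_mul, mul_assoc, ← Finset.mul_sum,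
    mul_div_mul_left _ _ hc]

theorem headOut_one_eq_headOut_card {α : Type*} [Fintype α] [DecidableEq α] (τ : ℕ → α)
    {rep : α → ℕ} (hrep : ∀ v, τ (rep v) = v) {m : ℕ} (hm : ∀ v, rep v < m)
    {Kc Vc : ℕ → Fin d → ℝ}
    (hKV : ∀ a a', a < m → a' < m → τ a = τ a' → Kc a = Kc a' ∧ Vc a = Vc a')
    (q : Fin d → ℝ) :
    headOut δ WVO WK WQ (fun _ : Fin m => (1 : ℝ)) (fun a => Kc a) (fun a => Vc a) q =
      headOut δ WVO WK WQ (fun v => (((Finset.range m).filter fun k => τ k = v).card : ℝ))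
        (fun v => Kc (rep v)) (fun v => Vc (rep v)) q := by
  have hfactor (a : ℕ) (ha : a < m) : Kc a = Kc (rep (τ a)) ∧ Vc a = Vc (rep (τ a)) :=
    hKV a _ ha (hm _) (hrep _).symm
  simp only [headOut, one_mul]
  rw [sum_fin_eq_sum_card_nsmul τ (F := fun a => δ (WK *ᵥ Kc a) (WQ *ᵥ q))
    (G := fun v => δ (WK *ᵥ Kc (rep v)) (WQ *ᵥ q)) fun a ha => by rw [(hfactor a ha).1]]
  rw [sum_fin_eq_sum_card_nsmul τ
    (F := fun a => (δ (WK *ᵥ Kc a) (WQ *ᵥ q) / _) • WVO *ᵥ Vc a)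
    (G := fun v => (δ (WK *ᵥ Kc (rep v)) (WQ *ᵥ q) / _) • WVO *ᵥ Vc (rep v))
    fun a ha => by rw [(hfactor a ha).1, (hfactor a ha).2]]
  simp only [← Nat.cast_smul_eq_nsmul ℝ, smul_smul, smul_eq_mul, mul_div_assoc]

theorem headOut_one_eq_headOut_empiricalFreq {α : Type*} [Fintype α] [DecidableEq α]
    (τ : ℕ → α) {rep : α → ℕ} (hrep : ∀ v, τ (rep v) = v) {m : ℕ} (hm : ∀ v, rep v < m)
    {Kc Vc : ℕ → Fin d → ℝ}
    (hKV : ∀ a a', a < m → a' < m → τ a = τ a' → Kc a = Kc a' ∧ Vc a = Vc a')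
    (q : Fin d → ℝ) :
    headOut δ WVO WK WQ (fun _ : Fin m => (1 : ℝ)) (fun a => Kc a) (fun a => Vc a) q =
      headOut δ WVO WK WQ (empiricalFreq τ m) (fun v => Kc (rep v)) (fun v => Vc (rep v)) q := by
  obtain ⟨v⟩ : Nonempty α := ⟨τ 0⟩
  have hm₀ : (m : ℝ) ≠ 0 := Nat.cast_ne_zero.mpr (hm v).ne_bot
  rw [headOut_one_eq_headOut_card δ WVO WK WQ τ hrep hm hKV,
    ← headOut_smul_weights δ WVO WK WQ (inv_ne_zero hm₀)]
  congr 1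
  ext v
  simp [empiricalFreq, div_eq_inv_mul]

theorem headOut_eq_inv_smul {ι : Type*} [Fintype ι] (w : ι → ℝ) (Kc Vc : ι → Fin d → ℝ)
    (q : Fin d → ℝ) :
    headOut δ WVO WK WQ w Kc Vc q = (∑ k, w k * δ (WK *ᵥ Kc k) (WQ *ᵥ q))⁻¹ •
      ∑ i, (w i * δ (WK *ᵥ Kc i) (WQ *ᵥ q)) • WVO *ᵥ Vc i := by
  simp only [headOut, Finset.smul_sum, smul_smul, div_eq_inv_mul]

theorem continuousAt_headOut {ι : Type*} [Fintype ι]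
    (hδ : Continuous fun x : (Fin d → ℝ) × (Fin d → ℝ) => δ x.1 x.2)
    {w : ι → ℝ} {Kc Vc : ι → Fin d → ℝ} {q : Fin d → ℝ}
    (hw : ∑ k, w k * δ (WK *ᵥ Kc k) (WQ *ᵥ q) ≠ 0) :
    ContinuousAt (fun z : (ι → ℝ) × (ι → Fin d → ℝ) × (ι → Fin d → ℝ) × (Fin d → ℝ) =>
      headOut δ WVO WK WQ z.1 z.2.1 z.2.2.1 z.2.2.2) (w, Kc, Vc, q) := by
  have hden : Continuous fun z : (ι → ℝ) × (ι → Fin d → ℝ) × (ι → Fin d → ℝ) × (Fin d → ℝ) =>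
      ∑ k, z.1 k * δ (WK *ᵥ z.2.1 k) (WQ *ᵥ z.2.2.2) := by fun_prop
  simp only [headOut_eq_inv_smul]
  exact (hden.continuousAt.inv₀ hw).smul (by fun_prop)

theorem tendstoInProb_headOut {Ω : Type*} [MeasurableSpace Ω] {P : Measure Ω} {κ : Type*}
    {l : Filter κ} {ι : Type*} [Fintype ι]
    (hδ : Continuous fun x : (Fin d → ℝ) × (Fin d → ℝ) => δ x.1 x.2)
    {w : κ → ι → ℝ} {w₀ : ι → ℝ} {Kc Vc : κ → Ω → ι → Fin d → ℝ} {K₀ V₀ : ι → Fin d → ℝ}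
    {q : κ → Ω → Fin d → ℝ} {q₀ : Fin d → ℝ} (hw : Tendsto w l (𝓝 w₀))
    (hK : ∀ i, TendstoInProb P l (fun n ω => Kc n ω i) fun _ => K₀ i)
    (hV : ∀ i, TendstoInProb P l (fun n ω => Vc n ω i) fun _ => V₀ i)
    (hq : TendstoInProb P l q fun _ => q₀) (h₀ : ∑ k, w₀ k * δ (WK *ᵥ K₀ k) (WQ *ᵥ q₀) ≠ 0) :
    TendstoInProb P l (fun n ω => headOut δ WVO WK WQ (w n) (Kc n ω) (Vc n ω) (q n ω))
      fun _ => headOut δ WVO WK WQ w₀ K₀ V₀ q₀ := by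
  have hjoint : TendstoInProb P l (fun n ω => (w n, Kc n ω, Vc n ω, q n ω))
      fun _ => (w₀, K₀, V₀, q₀) :=
    (hw.tendstoInProb P).prodMk <| (tendstoInProb_pi hK).prodMk <|
      (tendstoInProb_pi hV).prodMk hq
  exact ((continuousAt_headOut δ WVO WK WQ hδ h₀).comp_tendstoInProb hjoint :)

end headOut

/-- Growing random matrices are modelled by their columns: `Q n ω j` is the `j`-th column of
`Q^(n)` (relevant for `j < n`), and similarly for `K`, `V`; fixed matrices are given by their
columns `Qstar`, `Kstar`, `Vstar`. -/
theorem reweighted_attention_head_asymptotic_general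
    {Ω : Type*} [MeasurableSpace Ω] (P : Measure Ω)
    (d nstar mstar : ℕ)
    (δ : (Fin d → ℝ) → (Fin d → ℝ) → ℝ)
    (hδ_cont : Continuous fun x : (Fin d → ℝ) × (Fin d → ℝ) => δ x.1 x.2)
    (hδ_pos : ∀ x y, 0 < δ x y)
    (WVO WK WQ : Matrix (Fin d) (Fin d) ℝ)
    (Qstar : Fin nstar → Fin d → ℝ) (Kstar Vstar : Fin mstar → Fin d → ℝ)
    (p : Fin mstar → ℝ) (hp_pos : ∀ v, 0 < p v)
    (τ : ℕ → Fin mstar) (ρ : ℕ → Fin nstar)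
    (Q : ℕ → Ω → ℕ → Fin d → ℝ) (K V : ℕ → Ω → ℕ → Fin d → ℝ)
    (hQ : ∀ j : ℕ,
      TendstoInProb P (atTop : Filter ℕ) (fun n ω => Q n ω j) (fun _ => Qstar (ρ j)))
    (hK : ∀ i : ℕ,
      TendstoInProb P (atTop : Filter ℕ) (fun m ω => K m ω i) (fun _ => Kstar (τ i)))
    (hV : ∀ i : ℕ,
      TendstoInProb P (atTop : Filter ℕ) (fun m ω => V m ω i) (fun _ => Vstar (τ i)))
    (h_grp : ∀ m : ℕ, ∀ᵐ ω ∂P, ∀ i i' : ℕ, i < m → i' < m → τ i = τ i' →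
      K m ω i = K m ω i' ∧ V m ω i = V m ω i')
    (h_card : ∀ v : Fin mstar,
      Tendsto (fun m : ℕ => (((Finset.range m).filter fun k => τ k = v).card : ℝ) / (m : ℝ))
        atTop (nhds (p v))) :
    ∀ j : ℕ,
      TendstoInProb P (atTop : Filter (ℕ × ℕ))
        (fun mn ω =>
          headOut δ WVO WK WQ (fun _ : Fin mn.1 => (1 : ℝ))
            (fun i : Fin mn.1 => K mn.1 ω i.val) (fun i : Fin mn.1 => V mn.1 ω i.val)
            (Q mn.2 ω j))
        (fun _ => headOut δ WVO WK WQ p Kstar Vstar (Qstar (ρ j))) := by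
  intro j
  choose rep hrep using fun v => exists_eq_of_tendsto_empiricalFreq (h_card v) (hp_pos v).ne'
  have hfst : Tendsto (Prod.fst : ℕ × ℕ → ℕ) atTop atTop := by
    rw [← prod_atTop_atTop_eq]; exact tendsto_fst
  have hsnd : Tendsto (Prod.snd : ℕ × ℕ → ℕ) atTop atTop := by
    rw [← prod_atTop_atTop_eq]; exact tendsto_snd
  have hden : ∑ v, p v * δ (WK *ᵥ Kstar v) (WQ *ᵥ Qstar (ρ j)) ≠ 0 :=
    (sum_pos (fun v _ => mul_pos (hp_pos v) (hδ_pos _ _)) ⟨τ 0, mem_univ _⟩).ne'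
  have hlim := tendstoInProb_headOut δ WVO WK WQ hδ_cont
    (w := fun mn : ℕ × ℕ => empiricalFreq τ mn.1) (Kc := fun mn ω v => K mn.1 ω (rep v))
    (Vc := fun mn ω v => V mn.1 ω (rep v)) (q := fun mn ω => Q mn.2 ω j)
    ((tendsto_pi_nhds.mpr h_card).comp hfst)
    (fun v => by simpa only [hrep] using (hK (rep v)).comp_tendsto hfst)
    (fun v => by simpa only [hrep] using (hV (rep v)).comp_tendsto hfst)
    ((hQ j).comp_tendsto hsnd) hden
  refine hlim.congr_ae ?_
  filter_upwards [hfst.eventually (eventually_gt_atTop (univ.sup rep))] with mn hmn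
  filter_upwards [h_grp mn.1] with ω hω
  exact headOut_one_eq_headOut_empiricalFreq δ WVO WK WQ τ hrep
    (fun v => (le_sup (mem_univ v)).trans_lt hmn) hω _

/-- asymptotic equivalence of a single attention head and its reweighted
version.  Growing random matrices are modelled by their columns: `Q n ω j` is the `j`-th
column of `Q^(n)` (relevant for `j < n`), and similarly for `K`, `V`; fixed matrices are
given by their columns `Qstar`, `Kstar`, `Vstar`. -/
theorem reweighted_attention_head_asymptotic
    {Ω : Type*} [MeasurableSpace Ω] (P : Measure Ω) [IsProbabilityMeasure P]
    (d nstar mstar : ℕ) (hd : 0 < d) (hnstar : 0 < nstar) (hmstar : 0 < mstar)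
    (δ : (Fin d → ℝ) → (Fin d → ℝ) → ℝ)
    (hδ_cont : Continuous fun x : (Fin d → ℝ) × (Fin d → ℝ) => δ x.1 x.2)
    (hδ_pos : ∀ x y, 0 < δ x y)
    (WVO WK WQ : Matrix (Fin d) (Fin d) ℝ)
    (Qstar : Fin nstar → Fin d → ℝ) (Kstar Vstar : Fin mstar → Fin d → ℝ)
    (p : Fin mstar → ℝ) (hp_pos : ∀ v, 0 < p v) (hp_le : ∀ v, p v ≤ 1)
    (hp_sum : ∑ v, p v = 1)
    (τ : ℕ → Fin mstar) (ρ : ℕ → Fin nstar)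
    (Q : ℕ → Ω → ℕ → Fin d → ℝ) (K V : ℕ → Ω → ℕ → Fin d → ℝ)
    (hQ : ∀ j : ℕ,
      TendstoInProb P (atTop : Filter ℕ) (fun n ω => Q n ω j) (fun _ => Qstar (ρ j)))
    (hK : ∀ i : ℕ,
      TendstoInProb P (atTop : Filter ℕ) (fun m ω => K m ω i) (fun _ => Kstar (τ i)))
    (hV : ∀ i : ℕ,
      TendstoInProb P (atTop : Filter ℕ) (fun m ω => V m ω i) (fun _ => Vstar (τ i)))
    (h_grp : ∀ m : ℕ, ∀ᵐ ω ∂P, ∀ i i' : ℕ, i < m → i' < m → τ i = τ i' →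
      K m ω i = K m ω i' ∧ V m ω i = V m ω i')
    (h_card : ∀ v : Fin mstar,
      Tendsto (fun m : ℕ => (((Finset.range m).filter fun k => τ k = v).card : ℝ) / (m : ℝ))
        atTop (nhds (p v))) :
    ∀ j : ℕ,
      TendstoInProb P (atTop : Filter (ℕ × ℕ))
        (fun mn ω =>
          headOut δ WVO WK WQ (fun _ : Fin mn.1 => (1 : ℝ))
            (fun i : Fin mn.1 => K mn.1 ω i.val) (fun i : Fin mn.1 => V mn.1 ω i.val)
            (Q mn.2 ω j))
        (fun _ => headOut δ WVO WK WQ p Kstar Vstar (Qstar (ρ j))) :=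
  reweighted_attention_head_asymptotic_general P d nstar mstar δ hδ_cont hδ_pos WVO WK WQ Qstar
    Kstar Vstar p hp_pos τ ρ Q K V hQ hK hV h_grp h_card

end
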